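/- Let N ≥ 2, let Γ be a set of N nonnegative integers containing 0, and let s be a real number with -N/2 < s < -N/2 + 1 such that 2s is not an integer. Then the generalized Vandermonde matrix with entries (s+j)^{γ_i}, j = 0,...,N-1, γ_i ∈ Γ, is invertible. -/

import Mathlib

/-!
Split a polynomial `p` with at most `N` monomials as `p = u + v` with `u` even and `v` odd.
Listed by increasing modulus `t₀ < t₁ < ⋯`, the nodes `s, s + 1, …, s + N - 1` alternate in sign,
so `p` vanishing at the nodes says `u(t_k) = ±v(t_k)` with alternating signs. Across each gap
`(t_k, t_{k+1})` either `u` and `v` have a common zero at an endpoint, or exactly one of them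
changes sign. This produces at least `N - 1` positive roots of `u` and `v` together, while
Descartes' rule of signs allows at most `#supp u - 1 + #supp v - 1 ≤ N - 2` unless `u = v = 0`.
So no nonzero combination of the rows `((s + j) ^ γ i)_j` vanishes.
-/

open Polynomial Finset

namespace Polynomial

theorem signVariations_lt_card_support {R : Type*} [Semiring R] [LinearOrder R] {P : R[X]}
    (hP : P ≠ 0) : P.signVariations < #P.support := by
  obtain ⟨n, hn⟩ := Nat.exists_eq_add_one.mpr (card_pos.mpr (support_nonempty.mpr hP))
  induction n generalizing P with
  | zero =>
    have hlead : P.eraseLead = 0 := card_support_eq_zero.mp (card_support_eraseLead' hn)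
    have : P.signVariations = 0 := by
      rw [← eraseLead_add_monomial_natDegree_leadingCoeff P, hlead, zero_add,
        signVariations_monomial]
    omega
  | succ n ih =>
    have hlead := card_support_eraseLead' hn
    have := ih (fun h => by simp [h] at hlead) hlead
    have := P.signVariations_le_eraseLead_succ
    omega

theorem card_lt_card_support_of_forall_pos_isRoot {R : Type*} [CommRing R] [LinearOrder R]
    [IsStrictOrderedRing R] {P : R[X]} (hP : P ≠ 0) {S : Finset R}
    (hS : ∀ x ∈ S, 0 < x ∧ P.IsRoot x) : #S < #P.support := by
  have hle : S.val ≤ P.roots.filter (0 < ·) :=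
    (Multiset.le_iff_subset S.nodup).mpr fun x hx => by
      obtain ⟨hpos, hroot⟩ := hS x hx
      exact Multiset.mem_filter.mpr ⟨(mem_roots hP).mpr hroot, hpos⟩
  calc #S ≤ P.roots.countP (0 < ·) := by
        rw [Multiset.countP_eq_card_filter]; exact Multiset.card_le_card hle
    _ ≤ P.signVariations := roots_countP_pos_le_signVariations P
    _ < #P.support := signVariations_lt_card_support hP

theorem card_lt_card_support_of_isRoot_mem_Ico {R : Type*} [CommRing R] [LinearOrder R]
    [IsStrictOrderedRing R] {P : R[X]} (hP : P ≠ 0) {t : ℕ → R} (ht : Monotone t)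
    (ht0 : 0 < t 0) {s : Finset ℕ} (hs : ∀ k ∈ s, ∃ x ∈ Set.Ico (t k) (t (k + 1)), P.IsRoot x) :
    #s < #P.support := by
  choose! f hf hroot using hs
  have hinj : Set.InjOn f s := fun a ha b hb hab => by
    by_contra hne
    exact Set.disjoint_left.mp (ht.pairwise_disjoint_on_Ico_succ hne) (hf a ha) (hab ▸ hf b hb)
  rw [← card_image_of_injOn hinj]
  refine card_lt_card_support_of_forall_pos_isRoot hP fun x hx => ?_
  obtain ⟨k, hk, rfl⟩ := mem_image.mp hx
  exact ⟨ht0.trans_le ((ht k.zero_le).trans (hf k hk).1), hroot k hk⟩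

theorem exists_isRoot_mem_Ioo_of_eval_mul_neg {P : ℝ[X]} {a b : ℝ} (hab : a ≤ b)
    (h : P.eval a * P.eval b < 0) : ∃ x ∈ Set.Ioo a b, P.IsRoot x := by
  have hcont : ContinuousOn (fun x => P.eval x) (Set.Icc a b) := P.continuousOn
  rcases mul_neg_iff.mp h with ⟨ha, hb⟩ | ⟨ha, hb⟩
  · exact intermediate_value_Ioo' hab hcont ⟨hb, ha⟩
  · exact intermediate_value_Ioo hab hcont ⟨ha, hb⟩

theorem card_add_card_lt_card_support {P : ℝ[X]} (hP : P ≠ 0) {t : ℕ → ℝ} (ht : StrictMono t)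
    (ht0 : 0 < t 0) {Z G : Finset ℕ} (hZ : ∀ k ∈ Z, P.eval (t k) = 0)
    (hG : ∀ k ∈ G, P.eval (t k) * P.eval (t (k + 1)) < 0) : #Z + #G < #P.support := by
  have hdisj : Disjoint Z G :=
    disjoint_left.mpr fun k hkZ hkG => by simpa [hZ k hkZ] using hG k hkG
  rw [← card_union_of_disjoint hdisj]
  refine card_lt_card_support_of_isRoot_mem_Ico hP ht.monotone ht0 fun k hk => ?_
  rcases mem_union.mp hk with hkZ | hkG
  · exact ⟨t k, Set.left_mem_Ico.mpr (ht k.lt_succ_self), hZ k hkZ⟩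
  · obtain ⟨x, hx, hroot⟩ :=
      exists_isRoot_mem_Ioo_of_eval_mul_neg (ht k.lt_succ_self).le (hG k hkG)
    exact ⟨x, Set.Ioo_subset_Ico_self hx, hroot⟩

section Parts

variable {R : Type*} [Semiring R] (p : R[X])

noncomputable def evenPart : R[X] := ∑ n ∈ p.support with Even n, monomial n (p.coeff n)

noncomputable def oddPart : R[X] := ∑ n ∈ p.support with Odd n, monomial n (p.coeff n)

theorem coeff_evenPart (n : ℕ) : (evenPart p).coeff n = if Even n then p.coeff n else 0 := by
  by_cases hn : p.coeff n = 0 <;> simp [evenPart, coeff_monomial, hn]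

theorem coeff_oddPart (n : ℕ) : (oddPart p).coeff n = if Odd n then p.coeff n else 0 := by
  by_cases hn : p.coeff n = 0 <;> simp [oddPart, coeff_monomial, hn]

theorem support_evenPart : (evenPart p).support = p.support.filter Even := by
  ext n; simp [coeff_evenPart, and_comm]

theorem support_oddPart : (oddPart p).support = p.support.filter Odd := by
  ext n; simp [coeff_oddPart, and_comm]

theorem evenPart_add_oddPart : evenPart p + oddPart p = p := by
  ext n
  simp only [coeff_add, coeff_evenPart, coeff_oddPart, ← Nat.not_even_iff_odd]
  split_ifs <;> simp

theorem card_support_evenPart_add_card_support_oddPart :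
    #(evenPart p).support + #(oddPart p).support = #p.support := by
  simp only [support_evenPart, support_oddPart, ← Nat.not_even_iff_odd]
  exact card_filter_add_card_filter_not _

end Parts

section Eval

variable {R : Type*} [Ring R] (p : R[X]) (x : R)

theorem eval_neg_evenPart : (evenPart p).eval (-x) = (evenPart p).eval x := by
  simp only [eval_eq_sum, sum_def, support_evenPart]
  refine sum_congr rfl fun n hn => ?_
  rw [(mem_filter.mp hn).2.neg_pow]

theorem eval_neg_oddPart : (oddPart p).eval (-x) = -(oddPart p).eval x := by
  simp only [eval_eq_sum, sum_def, support_oddPart, ← sum_neg_distrib]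
  refine sum_congr rfl fun n hn => ?_
  rw [(mem_filter.mp hn).2.neg_pow, mul_neg]

theorem eval_zero_oddPart : (oddPart p).eval 0 = 0 := by
  simp [← coeff_zero_eq_eval_zero, coeff_oddPart]

end Eval

theorem eval_eq_evenPart_add_sign_mul_oddPart (p : ℝ[X]) (x : ℝ) :
    p.eval x = (evenPart p).eval |x| + SignType.sign x * (oddPart p).eval |x| := by
  conv_lhs => rw [← evenPart_add_oddPart p]
  rcases lt_trichotomy x 0 with hx | rfl | hx
  · rw [abs_of_neg hx, sign_neg hx, eval_neg_evenPart, eval_neg_oddPart, eval_add]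
    simp
  · simp [eval_zero_oddPart]
  · simp [abs_of_pos hx, sign_pos hx]

theorem eq_zero_of_card_support_le_of_isRoot {R : Type*} [CommRing R] [LinearOrder R]
    [IsStrictOrderedRing R] {P : R[X]} {n : ℕ} {t : ℕ → R} (ht : StrictMono t) (ht0 : 0 < t 0)
    (hcard : #P.support ≤ n) (hroot : ∀ k < n, P.IsRoot (t k)) : P = 0 := by
  by_contra hP
  have := card_lt_card_support_of_forall_pos_isRoot hP (S := (range n).image t) fun x hx => by
    obtain ⟨k, hk, rfl⟩ := mem_image.mp hx
    exact ⟨ht0.trans_le (ht.monotone k.zero_le), hroot k (mem_range.mp hk)⟩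
  rw [card_image_of_injective _ ht.injective, card_range] at this
  omega

theorem mul_neg_or_mul_neg_of_eq_mul {R : Type*} [CommRing R] [LinearOrder R]
    [IsStrictOrderedRing R] {a a' b b' σ σ' : R} (h : a = σ * b) (h' : a' = σ' * b')
    (hσ : σ * σ' < 0) (ha : a * a' ≠ 0) : a * a' < 0 ∨ b * b' < 0 := by
  rcases lt_or_gt_of_ne ha with hneg | hpos
  · exact .inl hneg
  · have : a * a' = σ * σ' * (b * b') := by rw [h, h']; ring
    exact .inr (by nlinarith)

theorem eq_zero_of_eval_eq_mul_eval {n : ℕ} {u v : ℝ[X]} {t σ : ℕ → ℝ} (ht : StrictMono t)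
    (ht0 : 0 < t 0) (hσ : ∀ k, σ k * σ (k + 1) < 0)
    (huv : ∀ k < n, u.eval (t k) = σ k * v.eval (t k))
    (hcard : #u.support + #v.support ≤ n) : u = 0 ∧ v = 0 := by
  have hσ0 : ∀ k, σ k ≠ 0 := fun k h => by simpa [h] using hσ k
  have hv_of_hu : ∀ k < n, u.eval (t k) = 0 → v.eval (t k) = 0 := fun k hk h =>
    (mul_eq_zero.mp ((huv k hk).symm.trans h)).resolve_left (hσ0 k)
  by_cases hu : u = 0
  · refine ⟨hu, eq_zero_of_card_support_le_of_isRoot (P := v) (n := n) ht ht0 (by omega)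
      fun k hk => ?_⟩
    exact hv_of_hu k hk (by simp [hu])
  by_cases hv : v = 0
  · refine absurd (eq_zero_of_card_support_le_of_isRoot (n := n) ht ht0 (by omega)
      fun k hk => ?_) hu
    simpa [hv] using huv k hk
  exfalso
  set Z := (range n).filter fun k => u.eval (t k) = 0
  set Gu := (range (n - 1)).filter fun k => u.eval (t k) * u.eval (t (k + 1)) < 0
  set Gv := (range (n - 1)).filter fun k => v.eval (t k) * v.eval (t (k + 1)) < 0
  have hu_count : #Z + #Gu < #u.support := card_add_card_lt_card_support hu ht ht0
    (fun k hk => (mem_filter.mp hk).2) (fun k hk => (mem_filter.mp hk).2)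
  have hv_count : #Z + #Gv < #v.support := card_add_card_lt_card_support hv ht ht0
    (fun k hk => hv_of_hu k (mem_range.mp (mem_filter.mp hk).1) (mem_filter.mp hk).2)
    (fun k hk => (mem_filter.mp hk).2)
  -- each gap between consecutive nodes meets a common zero of `u` and `v`, or one of them
  -- changes sign across it
  have hcover : range (n - 1) ⊆ Z ∪ Z.image (· - 1) ∪ Gu ∪ Gv := by
    intro k hk
    have hkn := mem_range.mp hk
    simp only [Z, Gu, Gv, mem_union, mem_filter, mem_range, mem_image]
    by_cases h0 : u.eval (t k) = 0
    · exact .inl (.inl (.inl ⟨by omega, h0⟩))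
    by_cases h1 : u.eval (t (k + 1)) = 0
    · exact .inl (.inl (.inr ⟨k + 1, ⟨by omega, h1⟩, rfl⟩))
    rcases mul_neg_or_mul_neg_of_eq_mul (huv k (by omega)) (huv (k + 1) (by omega)) (hσ k)
      (mul_ne_zero h0 h1) with h | h
    · exact .inl (.inr ⟨hkn, h⟩)
    · exact .inr ⟨hkn, h⟩
  have hgaps : n - 1 ≤ 2 * #Z + #Gu + #Gv := calc
    n - 1 = #(range (n - 1)) := (card_range _).symm
    _ ≤ #(Z ∪ Z.image (· - 1) ∪ Gu ∪ Gv) := card_le_card hcover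
    _ ≤ #Z + #(Z.image (· - 1)) + #Gu + #Gv := by grw [card_union_le, card_union_le, card_union_le]
    _ ≤ 2 * #Z + #Gu + #Gv := by grw [card_image_le]; omega
  omega

def IsLacunaryUniquenessSet {R : Type*} [Semiring R] (n : ℕ) (S : Set R) : Prop :=
  ∀ p : R[X], #p.support ≤ n → (∀ x ∈ S, p.IsRoot x) → p = 0

theorem IsLacunaryUniquenessSet.mono {R : Type*} [Semiring R] {n : ℕ} {S T : Set R}
    (hS : IsLacunaryUniquenessSet n S) (hST : S ⊆ T) : IsLacunaryUniquenessSet n T :=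
  fun p hp hroot => hS p hp fun x hx => hroot x (hST hx)

theorem isLacunaryUniquenessSet_image_Iio {x : ℕ → ℝ} (hx : StrictMono fun k => |x k|)
    (hsign : ∀ k, x k * x (k + 1) < 0) (n : ℕ) :
    IsLacunaryUniquenessSet n (x '' Set.Iio n) := by
  intro p hp hroot
  have hx0 : x 0 ≠ 0 := fun h => by simpa [h] using hsign 0
  obtain ⟨hu, hv⟩ := eq_zero_of_eval_eq_mul_eval (u := evenPart p) (v := oddPart p)
    (σ := fun k => -SignType.sign (x k)) hx (abs_pos.mpr hx0)
    (fun k => by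
      have : SignType.sign (x k * x (k + 1)) = -1 := sign_neg (hsign k)
      rw [sign_mul] at this
      simp only [neg_mul_neg, ← SignType.coe_mul, this]
      norm_num)
    (fun k hk => by
      have := hroot (x k) ⟨k, hk, rfl⟩
      rw [IsRoot, eval_eq_evenPart_add_sign_mul_oddPart] at this
      linear_combination this)
    ((card_support_evenPart_add_card_support_oddPart p).trans_le hp)
  rw [← evenPart_add_oddPart p, hu, hv, add_zero]

theorem det_of_pow_ne_zero_of_isLacunaryUniquenessSet {R : Type*} [CommRing R] [IsDomain R] {N : ℕ}
    {γ : Fin N → ℕ} (hγ : Function.Injective γ) {x : Fin N → R}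
    (hx : IsLacunaryUniquenessSet N (Set.range x)) :
    (Matrix.of fun i j => x j ^ γ i).det ≠ 0 := by
  intro hdet
  obtain ⟨c, hc0, hc⟩ := Matrix.exists_vecMul_eq_zero_iff.mpr hdet
  set p : R[X] := ∑ i, monomial (γ i) (c i)
  have hcoeff : ∀ i, p.coeff (γ i) = c i := fun i => by
    simp [p, finsetSum_coeff, coeff_monomial, hγ.eq_iff]
  have hsupp : p.support ⊆ univ.image γ := fun n hn => by
    by_contra h
    apply mem_support_iff.mp hn
    simp only [p, finsetSum_coeff, coeff_monomial]
    exact sum_eq_zero fun i _ => if_neg fun hi => h (mem_image.mpr ⟨i, mem_univ i, hi⟩)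
  have hp : p = 0 := hx p ((card_le_card hsupp).trans (card_image_le.trans (card_fin N).le))
    (by
      rintro _ ⟨j, rfl⟩
      simpa [p, eval_finsetSum, Matrix.vecMul, dotProduct] using congrFun hc j)
  exact hc0 (by ext i; simpa [hp] using (hcoeff i).symm)

end Polynomial

theorem abs_sub_round_pos_and_lt {α : Type*} [Field α] [LinearOrder α] [IsStrictOrderedRing α]
    [FloorRing α] {x : α} (hx : ¬∃ k : ℤ, 2 * x = k) :
    0 < |x - round x| ∧ |x - round x| < 1 / 2 := by
  refine ⟨abs_pos.mpr fun h => hx ⟨2 * round x, ?_⟩, (abs_sub_round x).lt_of_ne fun h => hx ?_⟩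
  · push_cast; linarith [sub_eq_zero.mp h]
  · rcases (abs_eq (by norm_num)).mp h with h | h
    · exact ⟨2 * round x + 1, by push_cast; linarith⟩
    · exact ⟨2 * round x - 1, by push_cast; linarith⟩

-- `0, -1, 1, -2, 2, …`: for `0 < c < 1/2` the points `c + zigzag k` list `c + ℤ` by increasing
-- modulus.
def zigzag (k : ℕ) : ℤ := (-1) ^ k * ((k + 1) / 2 : ℕ)

theorem zigzag_two_mul (i : ℕ) : zigzag (2 * i) = i := by
  simp [zigzag, pow_mul]; omega

theorem zigzag_two_mul_add_one (i : ℕ) : zigzag (2 * i + 1) = -(i + 1) := by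
  simp [zigzag, pow_succ, pow_mul]; omega

theorem exists_zigzag_succ (k : ℕ) : ∃ m : ℕ, (zigzag k = m ∧ zigzag (k + 1) = -(m + 1)) ∨
    (zigzag k = -(m + 1) ∧ zigzag (k + 1) = m + 1) := by
  obtain ⟨i, rfl | rfl⟩ := Nat.even_or_odd' k
  · exact ⟨i, .inl ⟨zigzag_two_mul i, zigzag_two_mul_add_one i⟩⟩
  · refine ⟨i, .inr ⟨zigzag_two_mul_add_one i, ?_⟩⟩
    rw [show 2 * i + 1 + 1 = 2 * (i + 1) by ring, zigzag_two_mul]; push_cast; ring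

theorem strictMono_abs_add_zigzag {c : ℝ} (hc0 : 0 < c) (hc : c < 1 / 2) :
    StrictMono fun k => |c + zigzag k| := by
  refine strictMono_nat_of_lt_succ fun k => ?_
  obtain ⟨m, ⟨h, hsucc⟩ | ⟨h, hsucc⟩⟩ := exists_zigzag_succ k <;> simp only [h, hsucc] <;> push_cast
  · rw [abs_of_pos (by positivity), abs_of_neg (by linarith)]; linarith
  · rw [abs_of_neg (by linarith), abs_of_pos (by positivity)]; linarith

theorem add_zigzag_mul_add_zigzag_succ_neg {c : ℝ} (hc0 : 0 < c) (hc : c < 1) (k : ℕ) :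
    (c + zigzag k) * (c + zigzag (k + 1)) < 0 := by
  obtain ⟨m, ⟨h, hsucc⟩ | ⟨h, hsucc⟩⟩ := exists_zigzag_succ k <;> simp only [h, hsucc] <;> push_cast
  · exact mul_neg_of_pos_of_neg (by positivity) (by linarith)
  · exact mul_neg_of_neg_of_pos (by linarith) (by positivity)

theorem exists_alternating_subset_range_add_natCast (N : ℕ) (s : ℝ) (hs1 : -(N : ℝ) / 2 < s)
    (hs2 : s < -(N : ℝ) / 2 + 1) (hs3 : ¬∃ k : ℤ, 2 * s = k) :
    ∃ x : ℕ → ℝ, (StrictMono fun k => |x k|) ∧ (∀ k, x k * x (k + 1) < 0) ∧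
      x '' Set.Iio N ⊆ Set.range fun j : Fin N => s + (j : ℕ) := by
  -- `c` is the node of least modulus and `ε` its sign
  set c := s - round s with hc_def
  obtain ⟨hc0, hc⟩ := abs_sub_round_pos_and_lt hs3
  obtain ⟨ε, hε, hεc⟩ : ∃ ε : ℤ, (ε = 1 ∨ ε = -1) ∧ ε * c = |c| := by
    rcases abs_cases c with ⟨h, -⟩ | ⟨h, -⟩
    · exact ⟨1, .inl rfl, by simp [h]⟩
    · exact ⟨-1, .inr rfl, by simp [h]⟩
  have hε2 : (ε : ℝ) * ε = 1 := by rcases hε with rfl | rfl <;> norm_num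
  have hx : ∀ k, c + ε * zigzag k = ε * (|c| + zigzag k) := fun k => by
    linear_combination (-c) * hε2 + ε * hεc
  refine ⟨fun k => c + ε * zigzag k, ?_, fun k => ?_, ?_⟩
  · have habs : |(ε : ℝ)| = 1 := by rcases hε with rfl | rfl <;> norm_num
    simpa only [hx, abs_mul, habs, one_mul] using strictMono_abs_add_zigzag hc0 hc
  · dsimp only
    rw [hx, hx, mul_mul_mul_comm, hε2, one_mul]
    exact add_zigzag_mul_add_zigzag_succ_neg hc0 (by linarith) k
  · rintro _ ⟨k, hk, rfl⟩
    have hr : -2 * (N : ℤ) - 1 - ε < 4 * round s ∧ 4 * round s < -2 * (N : ℤ) + 5 - ε := by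
      have : ((-2 * (N : ℤ) - 1 - ε : ℤ) : ℝ) < ((4 * round s : ℤ) : ℝ) ∧
          ((4 * round s : ℤ) : ℝ) < ((-2 * (N : ℤ) + 5 - ε : ℤ) : ℝ) := by
        rcases hε with rfl | rfl <;> push_cast at hεc ⊢ <;> constructor <;> linarith
      exact_mod_cast this
    obtain ⟨j, hj, hjk⟩ : ∃ j : ℕ, j < N ∧ (j : ℤ) = ε * zigzag k - round s := by
      refine ⟨(ε * zigzag k - round s).toNat, ?_⟩
      rcases hε with rfl | rfl <;> obtain ⟨i, rfl | rfl⟩ := Nat.even_or_odd' k <;>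
        simp only [Set.mem_Iio] at hk <;>
        simp only [zigzag_two_mul, zigzag_two_mul_add_one] <;> omega
    refine ⟨⟨j, hj⟩, ?_⟩
    have : (j : ℝ) = ε * zigzag k - round s := by exact_mod_cast hjk
    simp only [this, hc_def]
    ring

theorem stmt_7_general (N : ℕ) (s : ℝ)
    (γ : Fin N → ℕ) (hγ : StrictMono γ)
    (hs1 : -(N : ℝ) / 2 < s) (hs2 : s < -(N : ℝ) / 2 + 1)
    (hs3 : ¬∃ k : ℤ, 2 * s = (k : ℝ)) :
    (Matrix.of fun i j : Fin N => (s + (j : ℕ)) ^ γ i).det ≠ 0 := by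
  obtain ⟨x, hx, hsign, hnodes⟩ := exists_alternating_subset_range_add_natCast N s hs1 hs2 hs3
  exact det_of_pow_ne_zero_of_isLacunaryUniquenessSet hγ.injective
    ((isLacunaryUniquenessSet_image_Iio hx hsign N).mono hnodes)

theorem stmt_7 (N : ℕ) (hN : 2 ≤ N) (s : ℝ)
    (γ : Fin N → ℕ) (hγ : StrictMono γ) (h0 : (0 : ℕ) ∈ Set.range γ)
    (hs1 : -(N : ℝ) / 2 < s) (hs2 : s < -(N : ℝ) / 2 + 1)
    (hs3 : ¬∃ k : ℤ, 2 * s = (k : ℝ)) :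
    (Matrix.of fun i j : Fin N => (s + (j : ℕ)) ^ γ i).det ≠ 0 :=
  stmt_7_general N s γ hγ hs1 hs2 hs3
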